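/- Let K be a field, f ∈ K[x] nonconstant and separable, g ∈ K[x] with deg g ≥ 2 and g' ≠ 0, m ≥ 3 an integer not divisible by char(K), and h ∈ K[x] with f(g(x)) = f(x) h(x)^m. Then deg f = 1, i.e., f(x) = a x + b with a ≠ 0, and g(x) = (x + b/a) h(x)^m - b/a. -/
import Mathlib


open Polynomial

private lemma sum_count_le {α : Type*} [DecidableEq α] (S : Finset α) (t : Multiset α) :
    ∑ β ∈ S, t.count β ≤ Multiset.card t := by
  calc ∑ β ∈ S, t.count β ≤ ∑ β ∈ S ∪ t.toFinset, t.count β :=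
        Finset.sum_le_sum_of_subset Finset.subset_union_left
    _ = ∑ β ∈ t.toFinset, t.count β := by
        refine (Finset.sum_subset Finset.subset_union_right ?_).symm
        intro x _ hx
        simp only [Multiset.mem_toFinset] at hx
        exact Multiset.count_eq_zero_of_notMem hx
    _ = Multiset.card t := Multiset.toFinset_sum_count_eq t

private lemma aux_natDegree_eq_one {L : Type*} [Field L] [IsAlgClosed L] (m : ℕ) (hm : 3 ≤ m)
    (f g h : L[X]) (hf : f.Separable) (hfd : 0 < f.natDegree)
    (hg : 2 ≤ g.natDegree) (hg' : derivative g ≠ 0) (hh0 : h ≠ 0)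
    (heq : f.comp g = f * h ^ m) : f.natDegree = 1 := by
  classical
  have hf0 : f ≠ 0 := fun h0 => by simp [h0] at hfd
  set n := f.natDegree with hn
  set d := g.natDegree with hd
  set H := h.natDegree with hH
  set p := f.comp g with hp
  have heq' : p = f * h ^ m := heq
  have hp0 : p ≠ 0 := by
    rw [heq']
    exact mul_ne_zero hf0 (pow_ne_zero _ hh0)
  -- degree identities
  have hdegp : p.natDegree = n * d := by rw [hp]; exact natDegree_comp
  have hdeg2 : n * d = n + m * H := by
    rw [← hdegp, heq', natDegree_mul hf0 (pow_ne_zero _ hh0), natDegree_pow]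
  -- derivative of f is nonzero
  have hf'0 : derivative f ≠ 0 := by
    intro h0
    have := hf
    rw [Polynomial.Separable, h0, isCoprime_zero_right] at this
    exact absurd (natDegree_eq_zero_of_isUnit this) (by omega)
  have hgC : g ≠ C (g.coeff 0) := by
    intro h0
    rw [h0, natDegree_C] at hd
    omega
  have hfc0 : (derivative f).comp g ≠ 0 := by
    rw [Ne, comp_eq_zero_iff]
    push_neg
    exact ⟨hf'0, fun _ => hgC⟩
  have hp'0 : derivative p ≠ 0 := by
    rw [hp, derivative_comp]
    exact mul_ne_zero hg' hfc0
  -- roots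
  set S := p.roots.toFinset with hS
  have hcard : ∑ β ∈ S, p.rootMultiplicity β = n * d := by
    rw [← hdegp, ← splits_iff_card_roots.mp (IsAlgClosed.splits p),
      ← Multiset.toFinset_sum_count_eq]
    exact Finset.sum_congr rfl fun β _ => (count_roots p).symm
  -- key bound per root
  have hkey : ∀ β ∈ S, p.rootMultiplicity β ≤ 1 + (derivative g).rootMultiplicity β := by
    intro β hβ
    have hβroot : p.IsRoot β := by
      rw [hS, Multiset.mem_toFinset, mem_roots hp0] at hβ
      exact hβ
    have hnr : ¬((derivative f).comp g).IsRoot β := by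
      intro hr
      have hroot_f : f.eval (g.eval β) = 0 := by
        have := hβroot
        rwa [hp, IsRoot, eval_comp] at this
      rw [IsRoot, eval_comp] at hr
      obtain ⟨u, v, huv⟩ := hf
      have := congrArg (eval (g.eval β)) huv
      simp [hroot_f, hr] at this
    have h1 : p.rootMultiplicity β - 1 ≤ (derivative p).rootMultiplicity β :=
      rootMultiplicity_sub_one_le_derivative_rootMultiplicity_of_ne_zero p β hp'0
    have h2 : (derivative p).rootMultiplicity β = (derivative g).rootMultiplicity β := by
      conv_lhs => rw [hp, derivative_comp]
      rw [rootMultiplicity_mul (by rw [← derivative_comp, ← hp]; exact hp'0),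
        rootMultiplicity_eq_zero hnr, add_zero]
    omega
  -- sum of multiplicities of derivative g
  have hsum2 : ∑ β ∈ S, (derivative g).rootMultiplicity β ≤ d - 1 := by
    have h1 : ∑ β ∈ S, (derivative g).rootMultiplicity β
        = ∑ β ∈ S, (derivative g).roots.count β :=
      Finset.sum_congr rfl fun β _ => (count_roots _).symm
    have h2 := sum_count_le S (derivative g).roots
    have h3 := card_roots' (derivative g)
    have h4 : (derivative g).natDegree < d := natDegree_derivative_lt (by omega)
    omega
  -- main inequality
  have hmain : n * d ≤ S.card + (d - 1) := by
    calc n * d = ∑ β ∈ S, p.rootMultiplicity β := hcard.symm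
      _ ≤ ∑ β ∈ S, (1 + (derivative g).rootMultiplicity β) := Finset.sum_le_sum hkey
      _ = S.card + ∑ β ∈ S, (derivative g).rootMultiplicity β := by
          rw [Finset.sum_add_distrib, Finset.sum_const, smul_eq_mul, mul_one]
      _ ≤ S.card + (d - 1) := by omega
  -- card bound
  have hN : S.card ≤ n + H := by
    have hsub : S ⊆ f.roots.toFinset ∪ h.roots.toFinset := by
      intro β hβ
      rw [hS, Multiset.mem_toFinset, mem_roots hp0] at hβ
      have := hβ
      rw [heq', IsRoot, eval_mul, eval_pow, mul_eq_zero, pow_eq_zero_iff (by omega)] at this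
      rcases this with h1 | h1
      · exact Finset.mem_union_left _ (by rw [Multiset.mem_toFinset, mem_roots hf0]; exact h1)
      · exact Finset.mem_union_right _ (by rw [Multiset.mem_toFinset, mem_roots hh0]; exact h1)
    calc S.card ≤ f.roots.toFinset.card + h.roots.toFinset.card :=
          le_trans (Finset.card_le_card hsub) (Finset.card_union_le _ _)
      _ ≤ n + H := by
          have h1 := Multiset.toFinset_card_le f.roots
          have h2 := Multiset.toFinset_card_le h.roots
          have h3 := card_roots' f
          have h4 := card_roots' h
          omega
  -- conclude n = 1
  -- n*d = n + m*H, n*d ≤ n + H + (d-1)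
  have key1 : m * H ≤ H + (d - 1) := by omega
  have key2 : n * (d - 1) = m * H := by
    have h1 : n * d = n * (d - 1) + n := by
      have h2 : d - 1 + 1 = d := by omega
      calc n * d = n * (d - 1 + 1) := by rw [h2]
        _ = n * (d - 1) + n := by ring
    omega
  -- 2*(n*(d-1)) = 2*m*H ≤ 2H + 2(d-1) ≤ 3(d-1) since 2H ≤ d-1 (from 3H ≤ mH ≤ H + d-1)
  have h2H : 2 * H ≤ d - 1 := by
    have : 3 * H ≤ m * H := Nat.mul_le_mul_right H hm
    omega
  have hfin : 2 * (n * (d - 1)) ≤ 3 * (d - 1) := by omega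
  have hd1 : 1 ≤ d - 1 := by omega
  by_contra hne
  have hn2 : 2 ≤ n := by omega
  have : 4 * (d - 1) ≤ 2 * (n * (d - 1)) := by nlinarith
  omega

theorem stmt_4 {K : Type*} [Field K] (m : ℕ) (hm : 3 ≤ m) (hchar : (m : K) ≠ 0)
    (f g h : K[X]) (hf : f.Separable) (hfd : 0 < f.natDegree)
    (hg : 2 ≤ g.natDegree) (hg' : derivative g ≠ 0)
    (heq : f.comp g = f * h ^ m) :
    ∃ a b : K, a ≠ 0 ∧ f = C a * X + C b ∧
      g = (X + C (b / a)) * h ^ m - C (b / a) := by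
  have hf0 : f ≠ 0 := fun h0 => by simp [h0] at hfd
  have hh0 : h ≠ 0 := by
    intro h0
    have : (f.comp g).natDegree = f.natDegree * g.natDegree := natDegree_comp
    rw [heq, h0, zero_pow (by omega), mul_zero, natDegree_zero] at this
    have : f.natDegree * g.natDegree ≥ 2 := by nlinarith
    omega
  -- move to algebraic closure to prove natDegree f = 1
  have hn1 : f.natDegree = 1 := by
    let L := AlgebraicClosure K
    let φ := algebraMap K L
    have hinj : Function.Injective φ := φ.injective
    have h1 : (f.map φ).natDegree = 1 := by
      apply aux_natDegree_eq_one m hm (f.map φ) (g.map φ) (h.map φ)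
      · exact hf.map
      · rwa [natDegree_map]
      · rwa [natDegree_map]
      · rw [derivative_map]
        exact fun h0 => hg' ((Polynomial.map_eq_zero φ).mp h0)
      · exact fun h0 => hh0 ((Polynomial.map_eq_zero φ).mp h0)
      · rw [← Polynomial.map_comp, heq, Polynomial.map_mul, Polynomial.map_pow]
    rwa [natDegree_map] at h1
  set a := f.coeff 1 with ha
  set b := f.coeff 0 with hb
  have hfeq : f = C a * X + C b := eq_X_add_C_of_natDegree_le_one (by omega)
  have ha0 : a ≠ 0 := by
    have : a = f.leadingCoeff := by rw [ha, Polynomial.leadingCoeff, hn1]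
    rw [this]
    exact leadingCoeff_ne_zero.mpr hf0
  refine ⟨a, b, ha0, hfeq, ?_⟩
  have habc : a * (b / a) = b := mul_div_cancel₀ b ha0
  have hCa : (C a : K[X]) ≠ 0 := fun h0 => ha0 (C_eq_zero.mp h0)
  apply mul_left_cancel₀ hCa
  have lhs : C a * g = (C a * X + C b) * h ^ m - C b := by
    have h1 : (C a * X + C b).comp g = C a * g + C b := by simp
    have h2 : C a * g + C b = (C a * X + C b) * h ^ m := by
      rw [← h1, ← hfeq, heq, hfeq]
    rw [← h2]; ring
  rw [lhs]
  have : C a * ((X + C (b / a)) * h ^ m - C (b / a))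
      = (C a * X + C (a * (b / a))) * h ^ m - C (a * (b / a)) := by
    rw [C_mul]; ring
  rw [this, habc]
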